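/- Let ψ be a unit speed curve with κ > 0 and let f = τ/κ. If ψ is a slant helix with ⟨N, d⟩ = n for a fixed unit vector d (0 < |n| < 1), then along the curve the geodesic curvature of the principal normal indicatrix, κ²/(κ²+τ²)^{3/2} · (τ/κ)' (derivative with respect to arclength s), is constant equal to ±n/√(1-n²). -/

import Mathlib

/-! Write `a = ⟪T, d⟫` and `b = ⟪B, d⟫`. Differentiating the constant `⟪N, d⟫ = n` along the
Frenet equations gives `κ a = τ b`, and Parseval in the frame gives `a² + n² + b² = 1`, so
`b² (κ² + τ²) = κ² (1 - n²)`: `b` never vanishes, hence keeps a sign `ε`. Then `τ/κ = a/b`, and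
`a' = κ n`, `b' = -τ n` give `(τ/κ)' = n (κ² + τ²) / (κ b)`; substituting
`b √(κ² + τ²) = ε κ √(1 - n²)` yields the value. -/

open Real
open scoped RealInnerProductSpace

theorem Orthonormal.sum_sq_inner_eq_norm_sq {ι E : Type*} [Fintype ι] [NormedAddCommGroup E]
    [InnerProductSpace ℝ E] [FiniteDimensional ℝ E] {v : ι → E} (hv : Orthonormal ℝ v)
    (hcard : Fintype.card ι = Module.finrank ℝ E) (x : E) :
    ∑ i, ⟪v i, x⟫ ^ 2 = ‖x‖ ^ 2 := by
  have hspan := (hv.linearIndependent.span_eq_top_of_card_eq_finrank' hcard).ge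
  simpa only [OrthonormalBasis.coe_mk] using (OrthonormalBasis.mk hv hspan).sum_sq_inner_right x

theorem orthonormal_vecCons_three {E : Type*} [NormedAddCommGroup E] [InnerProductSpace ℝ E]
    {u v w : E} (hu : ‖u‖ = 1) (hv : ‖v‖ = 1) (hw : ‖w‖ = 1)
    (huv : ⟪u, v⟫ = 0) (huw : ⟪u, w⟫ = 0) (hvw : ⟪v, w⟫ = 0) :
    Orthonormal ℝ ![u, v, w] := by
  rw [orthonormal_iff_ite]
  intro i j
  fin_cases i <;> fin_cases j <;>
    simp [hu, hv, hw, huv, huw, hvw, real_inner_comm u v,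
      real_inner_comm u w, real_inner_comm v w]

theorem exists_sign_forall_eq_mul_abs {α : Type*} [TopologicalSpace α] [PreconnectedSpace α]
    {g : α → ℝ} (hg : Continuous g) (hne : ∀ x, g x ≠ 0) :
    ∃ ε : ℝ, (ε = 1 ∨ ε = -1) ∧ ∀ x, g x = ε * |g x| := by
  rcases isPreconnected_univ.eq_or_eq_neg_of_sq_eq hg.continuousOn hg.abs.continuousOn
    (fun x _ => by simp [sq_abs]) (fun {x} _ => abs_ne_zero.mpr (hne x)) with h | h
  · exact ⟨1, .inl rfl, fun x => by simpa using h (Set.mem_univ x)⟩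
  · exact ⟨-1, .inr rfl, fun x => by simpa using h (Set.mem_univ x)⟩

theorem Real.rpow_three_halves {x : ℝ} (hx : 0 ≤ x) : x ^ (3 / 2 : ℝ) = x * √x := by
  rw [sqrt_eq_rpow, show (3 / 2 : ℝ) = 1 + 1 / 2 by norm_num, rpow_add' hx (by norm_num), rpow_one]

section FrenetFrame

variable {E : Type*} [NormedAddCommGroup E] [InnerProductSpace ℝ E] {T N B : ℝ → E}
  {κ τ : ℝ → ℝ} {d : E} {n : ℝ}

theorem hasDerivAt_inner_tangent (hT : ∀ s, HasDerivAt T (κ s • N s) s)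
    (hangle : ∀ s, ⟪N s, d⟫ = n) (s : ℝ) : HasDerivAt (fun u => ⟪T u, d⟫) (κ s * n) s := by
  simpa [real_inner_smul_left, hangle] using (hT s).inner ℝ (hasDerivAt_const s d)

theorem hasDerivAt_inner_binormal (hB : ∀ s, HasDerivAt B (-(τ s) • N s) s)
    (hangle : ∀ s, ⟪N s, d⟫ = n) (s : ℝ) : HasDerivAt (fun u => ⟪B u, d⟫) (-(τ s) * n) s := by
  simpa [real_inner_smul_left, hangle] using (hB s).inner ℝ (hasDerivAt_const s d)

theorem curvature_mul_inner_tangent_eq (hN : ∀ s, HasDerivAt N (-(κ s) • T s + τ s • B s) s)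
    (hangle : ∀ s, ⟪N s, d⟫ = n) (s : ℝ) : κ s * ⟪T s, d⟫ = τ s * ⟪B s, d⟫ := by
  have h := (hN s).inner ℝ (hasDerivAt_const s d)
  simp only [hangle, inner_zero_right, zero_add] at h
  have h0 := (hasDerivAt_const s n).unique h
  simp only [inner_add_left, real_inner_smul_left] at h0
  linarith

end FrenetFrame

section SlantHelix

variable {κ τ a b : ℝ → ℝ} {n : ℝ} {s : ℝ}

theorem sq_mul_sq_add_sq_eq (hab : κ s * a s = τ s * b s) (hsum : a s ^ 2 + n ^ 2 + b s ^ 2 = 1) :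
    b s ^ 2 * (κ s ^ 2 + τ s ^ 2) = κ s ^ 2 * (1 - n ^ 2) := by
  linear_combination κ s ^ 2 * hsum - (κ s * a s + τ s * b s) * hab

theorem ne_zero_of_sq_mul_sq_add_sq_eq (hκ : 0 < κ s) (hn : n ^ 2 < 1)
    (h : b s ^ 2 * (κ s ^ 2 + τ s ^ 2) = κ s ^ 2 * (1 - n ^ 2)) : b s ≠ 0 := by
  rintro hb
  rw [hb] at h
  nlinarith [mul_pos (pow_pos hκ 2) (sub_pos.mpr hn)]

theorem hasDerivAt_div_of_mul_eq (hκ : ∀ s, 0 < κ s) (hb0 : ∀ s, b s ≠ 0)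
    (hab : ∀ s, κ s * a s = τ s * b s) (ha : HasDerivAt a (κ s * n) s)
    (hb : HasDerivAt b (-(τ s) * n) s) :
    HasDerivAt (fun u => τ u / κ u) (n * (κ s ^ 2 + τ s ^ 2) / (κ s * b s)) s := by
  have hfun : (fun u => τ u / κ u) = a / b := by
    funext u
    rw [Pi.div_apply, div_eq_div_iff (hκ u).ne' (hb0 u)]
    linarith [hab u]
  rw [hfun]
  refine (ha.div hb (hb0 s)).congr_deriv ?_
  rw [div_eq_div_iff (pow_ne_zero 2 (hb0 s)) (mul_ne_zero (hκ s).ne' (hb0 s))]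
  linear_combination (n * τ s * b s) * hab s

theorem mul_sqrt_sq_add_sq_eq {ε : ℝ} (hκ : 0 < κ s) (hε : b s = ε * |b s|)
    (h : b s ^ 2 * (κ s ^ 2 + τ s ^ 2) = κ s ^ 2 * (1 - n ^ 2)) :
    b s * √(κ s ^ 2 + τ s ^ 2) = ε * (κ s * √(1 - n ^ 2)) := by
  rw [hε, mul_assoc, ← sqrt_sq_eq_abs, ← sqrt_mul (sq_nonneg _), h,
    sqrt_mul (sq_nonneg _), sqrt_sq hκ.le]

theorem geodesic_curvature_eq_of_components (hκ : ∀ s, 0 < κ s) (hn : n ^ 2 < 1)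
    (ha : ∀ s, HasDerivAt a (κ s * n) s) (hb : ∀ s, HasDerivAt b (-(τ s) * n) s)
    (hab : ∀ s, κ s * a s = τ s * b s) (hsum : ∀ s, a s ^ 2 + n ^ 2 + b s ^ 2 = 1) :
    ∃ ε : ℝ, (ε = 1 ∨ ε = -1) ∧ ∀ s,
      κ s ^ 2 / (κ s ^ 2 + τ s ^ 2) ^ ((3:ℝ)/2) * deriv (fun u => τ u / κ u) s
        = ε * (n / Real.sqrt (1 - n ^ 2)) := by
  have hsq s := sq_mul_sq_add_sq_eq (hab s) (hsum s)
  have hb0 s := ne_zero_of_sq_mul_sq_add_sq_eq (hκ s) hn (hsq s)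
  have hbc : Continuous b := continuous_iff_continuousAt.2 fun s => (hb s).continuousAt
  obtain ⟨ε, hε, hsign⟩ := exists_sign_forall_eq_mul_abs hbc hb0
  refine ⟨ε, hε, fun s => ?_⟩
  have hκs := hκ s
  have hroot := mul_sqrt_sq_add_sq_eq hκs (hsign s) (hsq s)
  have hn' : 0 < √(1 - n ^ 2) := sqrt_pos.2 (sub_pos.2 hn)
  have hρ : 0 < √(κ s ^ 2 + τ s ^ 2) := sqrt_pos.2 (by positivity)
  rw [(hasDerivAt_div_of_mul_eq hκ hb0 hab (ha s) (hb s)).deriv,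
    rpow_three_halves (by positivity)]
  calc κ s ^ 2 / ((κ s ^ 2 + τ s ^ 2) * √(κ s ^ 2 + τ s ^ 2)) *
        (n * (κ s ^ 2 + τ s ^ 2) / (κ s * b s))
      = κ s * n / (b s * √(κ s ^ 2 + τ s ^ 2)) := by field_simp
    _ = ε * (n / √(1 - n ^ 2)) := by
      rw [hroot]
      rcases hε with rfl | rfl <;> field_simp

end SlantHelix

theorem slant_helix_geodesic_curvature_constant_general
    (T N B : ℝ → EuclideanSpace ℝ (Fin 3)) (κ τ : ℝ → ℝ)
    (d : EuclideanSpace ℝ (Fin 3)) (n : ℝ)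
    (hκpos : ∀ s, 0 < κ s)
    (hT : ∀ s, HasDerivAt T (κ s • N s) s)
    (hN : ∀ s, HasDerivAt N (-(κ s) • T s + τ s • B s) s)
    (hB : ∀ s, HasDerivAt B (-(τ s) • N s) s)
    (hTn : ∀ s, ‖T s‖ = 1) (hNn : ∀ s, ‖N s‖ = 1) (hBn : ∀ s, ‖B s‖ = 1)
    (hTN : ∀ s, ⟪T s, N s⟫ = 0) (hTB : ∀ s, ⟪T s, B s⟫ = 0)
    (hNB : ∀ s, ⟪N s, B s⟫ = 0)
    (hd : ‖d‖ = 1) (hn1 : |n| < 1)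
    (hangle : ∀ s, ⟪N s, d⟫ = n) :
    ∃ ε : ℝ, (ε = 1 ∨ ε = -1) ∧ ∀ s,
      κ s ^ 2 / (κ s ^ 2 + τ s ^ 2) ^ ((3:ℝ)/2) * deriv (fun u => τ u / κ u) s
        = ε * (n / Real.sqrt (1 - n ^ 2)) := by
  have hsum (s : ℝ) : ⟪T s, d⟫ ^ 2 + n ^ 2 + ⟪B s, d⟫ ^ 2 = 1 := by
    have hframe := orthonormal_vecCons_three (hTn s) (hNn s) (hBn s) (hTN s) (hTB s) (hNB s)
    simpa [Fin.sum_univ_three, hangle, hd] using hframe.sum_sq_inner_eq_norm_sq (by simp) d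
  exact geodesic_curvature_eq_of_components hκpos (sq_lt_one_iff_abs_lt_one n |>.2 hn1)
    (hasDerivAt_inner_tangent hT hangle) (hasDerivAt_inner_binormal hB hangle)
    (curvature_mul_inner_tangent_eq hN hangle) hsum

/-- For a slant helix (⟨N, d⟩ = n with d a fixed unit vector,
0 < |n| < 1), the geodesic curvature of the principal normal indicatrix,
κ²/(κ²+τ²)^{3/2} · (τ/κ)', is constant equal to ± n/√(1-n²). -/
theorem slant_helix_geodesic_curvature_constant
    (ψ T N B : ℝ → EuclideanSpace ℝ (Fin 3)) (κ τ : ℝ → ℝ)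
    (d : EuclideanSpace ℝ (Fin 3)) (n : ℝ)
    (hκpos : ∀ s, 0 < κ s)
    (hψ : ∀ s, HasDerivAt ψ (T s) s)
    (hT : ∀ s, HasDerivAt T (κ s • N s) s)
    (hN : ∀ s, HasDerivAt N (-(κ s) • T s + τ s • B s) s)
    (hB : ∀ s, HasDerivAt B (-(τ s) • N s) s)
    (hTn : ∀ s, ‖T s‖ = 1) (hNn : ∀ s, ‖N s‖ = 1) (hBn : ∀ s, ‖B s‖ = 1)
    (hTN : ∀ s, ⟪T s, N s⟫ = 0) (hTB : ∀ s, ⟪T s, B s⟫ = 0)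
    (hNB : ∀ s, ⟪N s, B s⟫ = 0)
    (hd : ‖d‖ = 1) (hn0 : 0 < |n|) (hn1 : |n| < 1)
    (hangle : ∀ s, ⟪N s, d⟫ = n)
    (hκc : Continuous κ) (hτc : Continuous τ)
    (hdiff : ∀ s, DifferentiableAt ℝ (fun u => τ u / κ u) s)
    (hdc : Continuous (deriv (fun u => τ u / κ u))) :
    ∃ ε : ℝ, (ε = 1 ∨ ε = -1) ∧ ∀ s,
      κ s ^ 2 / (κ s ^ 2 + τ s ^ 2) ^ ((3:ℝ)/2) * deriv (fun u => τ u / κ u) s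
        = ε * (n / Real.sqrt (1 - n ^ 2)) :=
  slant_helix_geodesic_curvature_constant_general T N B κ τ d n hκpos hT hN hB hTn hNn hBn hTN hTB
    hNB hd hn1 hangle
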